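/- arXiv:math/9610205 — 5 statements merged into one kernel-verified Lean document; each statement's English description precedes it below -/
import Mathlib

section
/- Let G be a Polish group, (X,τ) a Polish G-space, α ≥ 1 a countable ordinal, and U ⊆ G open. If B ∈ Σ⁰_α(X,τ) then the Vaught transform B^{ΔU} is Σ⁰_α(X,τ), and if B ∈ Π⁰_α(X,τ) then B^{*U} is Π⁰_α(X,τ). -/
open Topology
open Set Filter

/-- The Vaught transform `B^{ΔU}`: the set of `x ∈ X` such that
`{g ∈ U : g • x ∈ B}` is non-meager in the subspace `U`. -/
def vaughtDelta {G X : Type*} [TopologicalSpace G] [SMul G X] (U : Set G) (B : Set X) :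
    Set X :=
  {x | ¬ IsMeagre {g : U | (g : G) • x ∈ B}}

/-- The Vaught transform `B^{*U}`: the set of `x ∈ X` such that
`{g ∈ U : g • x ∈ B}` is comeager in the subspace `U`. -/
def vaughtStar {G X : Type*} [TopologicalSpace G] [SMul G X] (U : Set G) (B : Set X) :
    Set X :=
  {x | {g : U | (g : G) • x ∈ B} ∈ residual U}

/-- The additive Borel classes of a topological space `(X, τ)`, indexed by ordinals:
`SigmaZero τ 1 s` iff `s` is `τ`-open, and for `α > 1`, `SigmaZero τ α s` iff `s` is a
countable union `⋃ i, A i` where each `A i` is `Π⁰_{β i}` (i.e. its complement is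
`Σ⁰_{β i}`) for some `β i < α`. -/
inductive SigmaZero {X : Type*} (τ : TopologicalSpace X) : Ordinal.{0} → Set X → Prop
  | isOpen {s : Set X} (hs : IsOpen[τ] s) : SigmaZero τ 1 s
  | iUnion {α : Ordinal.{0}} (hα : 1 < α) (β : ℕ → Ordinal.{0}) (hβ : ∀ i, β i < α)
      (A : ℕ → Set X) (hA : ∀ i, SigmaZero τ (β i) (A i)ᶜ) : SigmaZero τ α (⋃ i, A i)

/-- `PiZero τ α s` means `s` is in the multiplicative Borel class `Π⁰_α(X, τ)`,
i.e. its complement is `Σ⁰_α(X, τ)`. -/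
def PiZero {X : Type*} (τ : TopologicalSpace X) (α : Ordinal.{0}) (s : Set X) : Prop :=
  SigmaZero τ α sᶜ


section aux
variable {α : Type*} [TopologicalSpace α]

lemma myNwdImage {U : Set α} {T : Set ↥U}
    (hT : IsNowhereDense T) : IsNowhereDense (Subtype.val '' T) := by
  rw [IsNowhereDense] at hT ⊢
  by_contra h
  obtain ⟨x, hx⟩ := nonempty_iff_ne_empty.2 h
  set W := interior (closure (Subtype.val '' T)) with hWdef
  have hWopen : IsOpen W := isOpen_interior
  have hWsub : W ⊆ closure (Subtype.val '' T) := interior_subset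
  have hclU : closure (Subtype.val '' T) ⊆ closure U :=
    closure_mono (by rintro y ⟨z, _, rfl⟩; exact z.2)
  have hxclU : x ∈ closure U := hclU (hWsub hx)
  obtain ⟨y, hyW, hyU⟩ := mem_closure_iff.mp hxclU W hWopen hx
  have hsub : (Subtype.val ⁻¹' W : Set ↥U) ⊆ closure T := by
    rw [IsEmbedding.subtypeVal.closure_eq_preimage_closure_image]
    exact preimage_mono hWsub
  have hopen : IsOpen (Subtype.val ⁻¹' W : Set ↥U) := hWopen.preimage continuous_subtype_val
  have : (⟨y, hyU⟩ : ↥U) ∈ interior (closure T) := interior_maximal hsub hopen hyW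
  rw [hT] at this
  exact this

lemma myMeagreIff {U : Set α} (hU : IsOpen U) (S : Set α) :
    IsMeagre (Subtype.val ⁻¹' S : Set ↥U) ↔ IsMeagre (S ∩ U) := by
  constructor
  · intro h
    rw [isMeagre_iff_countable_union_isNowhereDense] at h ⊢
    obtain ⟨F, hF, hFc, hsub⟩ := h
    refine ⟨(Subtype.val '' ·) '' F, ?_, hFc.image _, ?_⟩
    · rintro t ⟨t', ht', rfl⟩; exact myNwdImage (hF t' ht')
    · rintro x ⟨hxS, hxU⟩
      obtain ⟨t, htF, hxt⟩ := hsub (show (⟨x, hxU⟩ : ↥U) ∈ Subtype.val ⁻¹' S from hxS)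
      exact ⟨Subtype.val '' t, ⟨t, htF, rfl⟩, ⟨_, hxt, rfl⟩⟩
  · intro h
    have h2 := h.preimage_of_isOpenMap continuous_subtype_val hU.isOpenMap_subtype_val
    have h3 : (Subtype.val ⁻¹' (S ∩ U) : Set ↥U) = Subtype.val ⁻¹' S := by
      ext g; simp [g.2]
    rwa [h3] at h2

lemma myOpenNotMeagre [BaireSpace α] {W : Set α} (hW : IsOpen W) (hne : W.Nonempty) :
    ¬ IsMeagre W := by
  intro h
  obtain ⟨y, hyW, hyWc⟩ := (dense_of_mem_residual h).inter_open_nonempty W hW hne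
  exact hyWc hyW

lemma myMeagreUnion {s t : Set α} (hs : IsMeagre s) (ht : IsMeagre t) : IsMeagre (s ∪ t) := by
  rw [IsMeagre, compl_union]; exact Filter.inter_mem hs ht

end aux

lemma mySigmaZeroOneLe {X : Type*} [τ : TopologicalSpace X] {a : Ordinal} {s : Set X}
    (h : SigmaZero τ a s) : 1 ≤ a := by
  induction h with
  | isOpen hs => exact le_refl _
  | iUnion hα β hβ A hA ih => exact hα.le

lemma mySigmaZeroMeasurable {X : Type*} [τ : TopologicalSpace X] {a : Ordinal} {s : Set X}
    (h : SigmaZero τ a s) : @MeasurableSet X (borel X) s := by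
  letI : MeasurableSpace X := borel X
  haveI : BorelSpace X := ⟨rfl⟩
  induction h with
  | isOpen hs => exact hs.measurableSet
  | iUnion hα β hβ A hA ih =>
      exact MeasurableSet.iUnion fun i => compl_compl (A i) ▸ (ih i).compl

lemma mySigmaZeroMono {X : Type*} [τ : TopologicalSpace X] [PolishSpace X] {a b : Ordinal}
    {s : Set X} (h : SigmaZero τ a s) (hab : a ≤ b) : SigmaZero τ b s := by
  induction h with
  | @isOpen s hs =>
      rcases eq_or_lt_of_le hab with rfl | hb
      · exact .isOpen hs
      · letI := TopologicalSpace.upgradeIsCompletelyMetrizable X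
        have hgd : IsGδ sᶜ := hs.isClosed_compl.isGδ
        obtain ⟨T, hTopen, hTc, hTeq⟩ := hgd
        rcases T.eq_empty_or_nonempty with rfl | hTne
        · have hs0 : s = ⋃ (_ : ℕ), (∅ : Set X) := by
            have huniv : sᶜ = univ := by rw [hTeq]; simp
            rw [iUnion_empty, ← compl_compl s, huniv, compl_univ]
          rw [hs0]
          exact .iUnion hb (fun _ => 1) (fun _ => hb) _
            (fun i => by rw [compl_empty]; exact .isOpen isOpen_univ)
        · obtain ⟨f, hf⟩ := hTc.exists_eq_range hTne
          have hs0 : s = ⋃ n, (f n)ᶜ := by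
            rw [← compl_compl s, hTeq, hf, sInter_range, compl_iInter]
          rw [hs0]
          refine .iUnion hb (fun _ => 1) (fun _ => hb) _ (fun n => ?_)
          rw [compl_compl]
          exact .isOpen (hTopen _ (hf ▸ mem_range_self n))
  | iUnion hα β hβ A hA ih =>
      exact .iUnion (lt_of_lt_of_le hα hab) β (fun i => (hβ i).trans_le hab) A hA

lemma myVaughtDeltaSigmaZero {G X : Type*} [Group G] [TopologicalSpace G] [IsTopologicalGroup G]
    [PolishSpace G] [τ : TopologicalSpace X] [PolishSpace X] [MulAction G X] [ContinuousSMul G X]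
    {a : Ordinal} {B : Set X} (h : SigmaZero τ a B) :
    ∀ U : Set G, IsOpen U → SigmaZero τ a (vaughtDelta U B) := by
  haveI : BaireSpace G := by letI := TopologicalSpace.upgradeIsCompletelyMetrizable G; infer_instance
  induction h with
  | @isOpen B hB =>
    intro U hU
    have key : vaughtDelta U B = ⋃ g ∈ U, (fun x : X => g • x) ⁻¹' B := by
      ext x
      simp only [vaughtDelta, mem_setOf_eq, mem_iUnion, mem_preimage, exists_prop]
      rw [show {g : ↥U | (g : G) • x ∈ B} = Subtype.val ⁻¹' {g : G | g • x ∈ B} from rfl,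
        myMeagreIff hU]
      constructor
      · intro hnm
        rcases ({g : G | g • x ∈ B} ∩ U).eq_empty_or_nonempty with he | ⟨g, hg1, hg2⟩
        · exact absurd (he ▸ IsMeagre.empty) hnm
        · exact ⟨g, hg2, hg1⟩
      · rintro ⟨g, hgU, hgB⟩
        exact myOpenNotMeagre ((hB.preimage (continuous_id.smul continuous_const)).inter hU)
          ⟨g, hgB, hgU⟩
    rw [key]
    exact .isOpen (isOpen_biUnion fun g _ => hB.preimage (continuous_const_smul g))
  | @iUnion a ha β hβ A hA ih =>
    intro U hU
    classical
    obtain ⟨bas, hbasc, hbasnotmem, hbas⟩ := TopologicalSpace.exists_countable_basis G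
    have hbasne : bas.Nonempty := by
      rcases bas.eq_empty_or_nonempty with rfl | h'
      · exfalso
        have h1 : (1 : G) ∈ ⋃₀ (∅ : Set (Set G)) := hbas.sUnion_eq ▸ mem_univ 1
        simpa using h1
      · exact h'
    obtain ⟨V, hV⟩ := hbasc.exists_eq_range hbasne
    have hVopen : ∀ n, IsOpen (V n) := fun n => hbas.isOpen (hV ▸ mem_range_self n)
    set C : ℕ × ℕ → Set X := fun p =>
      if V p.2 ⊆ U ∧ (V p.2).Nonempty then (vaughtDelta (V p.2) (A p.1)ᶜ)ᶜ else ∅ with hC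
    letI : MeasurableSpace X := borel X
    haveI : BorelSpace X := ⟨rfl⟩
    letI : MeasurableSpace G := borel G
    haveI : BorelSpace G := ⟨rfl⟩
    have key : vaughtDelta U (⋃ i, A i) = ⋃ p : ℕ × ℕ, C p := by
      ext x
      simp only [vaughtDelta, mem_setOf_eq]
      rw [mem_iUnion]
      rw [show {g : ↥U | (g : G) • x ∈ ⋃ i, A i}
            = Subtype.val ⁻¹' {g : G | g • x ∈ ⋃ i, A i} from rfl,
        myMeagreIff hU]
      constructor
      · intro hnm
        have hdecomp : {g : G | g • x ∈ ⋃ i, A i} ∩ U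
            = ⋃ i, ({g : G | g • x ∈ A i} ∩ U) := by
          ext g; simp only [mem_inter_iff, mem_setOf_eq, mem_iUnion]; tauto
        rw [hdecomp] at hnm
        have hex : ¬ ∀ i, IsMeagre ({g : G | g • x ∈ A i} ∩ U) :=
          fun hall => hnm (isMeagre_iUnion hall)
        push_neg at hex
        obtain ⟨i, hi⟩ := hex
        set T := {g : G | g • x ∈ A i} with hT
        have hTm : MeasurableSet T := by
          have hAi : MeasurableSet (A i) :=
            compl_compl (A i) ▸ (mySigmaZeroMeasurable (hA i)).compl
          exact hAi.preimage ((continuous_id.smul continuous_const).measurable)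
        obtain ⟨u, huo, hueq⟩ := hTm.residualEq_isOpen
        have hD : IsMeagre {g : G | ¬ (g ∈ T ↔ g ∈ u)} := by
          rw [IsMeagre]
          have hcc : {g : G | ¬ (g ∈ T ↔ g ∈ u)}ᶜ = {g : G | g ∈ T ↔ g ∈ u} := by
            ext g; simp
          rw [hcc]
          exact eventuallyEq_set.mp hueq
        have huU : (u ∩ U).Nonempty := by
          rcases (u ∩ U).eq_empty_or_nonempty with he | hne
          · exfalso
            apply hi
            refine hD.mono ?_
            rintro g ⟨hgT, hgU⟩ hiff
            exact absurd (mem_inter (hiff.mp hgT) hgU) (he ▸ notMem_empty g)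
          · exact hne
        obtain ⟨g0, hg0⟩ := huU
        obtain ⟨v, hvbas, hg0v, hvsub⟩ := hbas.exists_subset_of_mem_open hg0 (huo.inter hU)
        obtain ⟨n, rfl⟩ : v ∈ range V := hV ▸ hvbas
        refine ⟨(i, n), ?_⟩
        rw [hC]
        have hcnd : V n ⊆ U ∧ (V n).Nonempty := ⟨hvsub.trans inter_subset_right, ⟨g0, hg0v⟩⟩
        simp only
        rw [if_pos hcnd]
        intro hnm2
        apply hnm2
        rw [show {g : ↥(V n) | (g : G) • x ∈ (A i)ᶜ}
              = Subtype.val ⁻¹' Tᶜ from rfl,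
          myMeagreIff (hVopen n)]
        refine hD.mono ?_
        rintro g ⟨hgTc, hgV⟩ hiff
        exact hgTc (hiff.mpr (hvsub hgV).1)
      · rintro ⟨⟨i, n⟩, hp⟩
        rw [hC] at hp
        simp only at hp
        by_cases hcond : V n ⊆ U ∧ (V n).Nonempty
        · rw [if_pos hcond] at hp
          have hp' : IsMeagre {g : ↥(V n) | (g : G) • x ∈ (A i)ᶜ} := not_not.mp hp
          rw [show {g : ↥(V n) | (g : G) • x ∈ (A i)ᶜ}
                = Subtype.val ⁻¹' {g : G | g • x ∈ A i}ᶜ from rfl,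
            myMeagreIff (hVopen n)] at hp'
          intro hm
          have h1 : IsMeagre ({g : G | g • x ∈ A i} ∩ V n) := by
            refine hm.mono ?_
            rintro g ⟨hgT, hgV⟩
            exact ⟨mem_iUnion.mpr ⟨i, hgT⟩, hcond.1 hgV⟩
          have h2 : IsMeagre (V n) := by
            have : V n = ({g : G | g • x ∈ A i} ∩ V n)
                ∪ ({g : G | g • x ∈ A i}ᶜ ∩ V n) := by
              ext g
              simp only [mem_union, mem_inter_iff, mem_compl_iff, mem_setOf_eq]
              tauto
            rw [this]
            exact myMeagreUnion h1 hp'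
          exact myOpenNotMeagre (hVopen n) hcond.2 h2
        · rw [if_neg hcond] at hp
          exact absurd hp (notMem_empty x)
    rw [key]
    have hsurj : Function.Surjective (Denumerable.eqv (ℕ × ℕ)).symm :=
      (Denumerable.eqv (ℕ × ℕ)).symm.surjective
    rw [← hsurj.iUnion_comp C]
    refine .iUnion ha (fun m => β ((Denumerable.eqv (ℕ × ℕ)).symm m).1)
      (fun m => hβ _) _ (fun m => ?_)
    set p := (Denumerable.eqv (ℕ × ℕ)).symm m with hpd
    rw [hC]
    by_cases hcond : V p.2 ⊆ U ∧ (V p.2).Nonempty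
    · simp only [if_pos hcond, compl_compl]
      exact ih p.1 (V p.2) (hVopen p.2)
    · simp only [if_neg hcond, compl_empty]
      exact mySigmaZeroMono (.isOpen isOpen_univ) (mySigmaZeroOneLe (hA p.1))

lemma myVaughtStarCompl {G X : Type*} [TopologicalSpace G] [SMul G X] (U : Set G) (B : Set X) :
    vaughtStar U B = (vaughtDelta U Bᶜ)ᶜ := by
  ext x
  simp only [vaughtStar, vaughtDelta, Set.mem_setOf_eq, Set.mem_compl_iff, not_not]
  rw [IsMeagre]
  have hcc : {g : ↥U | ¬ (g : G) • x ∈ B}ᶜ = {g : ↥U | (g : G) • x ∈ B} := by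
    ext g; simp
  rw [hcc]

/-- Let `G` be a Polish group, `(X, τ)` a Polish `G`-space, `α ≥ 1` a
countable ordinal, and `U ⊆ G` open. If `B ∈ Σ⁰_α(X, τ)` then `B^{ΔU} ∈ Σ⁰_α(X, τ)`,
and if `B ∈ Π⁰_α(X, τ)` then `B^{*U} ∈ Π⁰_α(X, τ)`. -/
theorem vaught_transform_borel_class {G X : Type*} [Group G] [TopologicalSpace G]
    [IsTopologicalGroup G] [PolishSpace G]
    [τ : TopologicalSpace X] [PolishSpace X] [MulAction G X] [ContinuousSMul G X]
    (α : Ordinal.{0}) (hα1 : 1 ≤ α) (hαcount : α.card ≤ Cardinal.aleph0)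
    (U : Set G) (hU : IsOpen U) :
    (∀ B : Set X, SigmaZero τ α B → SigmaZero τ α (vaughtDelta U B)) ∧
    (∀ B : Set X, PiZero τ α B → PiZero τ α (vaughtStar U B)) := by
  constructor
  · intro B hB
    exact myVaughtDeltaSigmaZero hB U hU
  · intro B hB
    rw [PiZero, myVaughtStarCompl, compl_compl]
    exact myVaughtDeltaSigmaZero hB U hU
end

section
/- Let G be a Polish group and d a right-invariant compatible metric on G bounded by 1. For f ∈ 𝓛(G,d) and g ∈ G define g·f by (g·f)(h) = f(hg) for all h ∈ G. Then g·f ∈ 𝓛(G,d), this defines a group action of G on 𝓛(G,d), the action is continuous, and 𝓛(G,d) with this action is a compact Polish G-space. -/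
open Topology

/-- `LSet d` is the set `𝓛(G, d)` of functions `f : G → [0,1]` such that
`|f g - f h| ≤ d g h` for all `g, h`, regarded as a subset of `G → ℝ` with the
product (pointwise convergence) topology. -/
def LSet {G : Type*} (d : G → G → ℝ) : Set (G → ℝ) :=
  {f | (∀ y, f y ∈ Set.Icc (0 : ℝ) 1) ∧ ∀ y₁ y₂, |f y₁ - f y₂| ≤ d y₁ y₂}

/-- Let `G` be a Polish group and `d` a right-invariant compatible
metric on `G` bounded by `1`. For `f ∈ 𝓛(G, d)` and `g ∈ G`, the function
`h ↦ f (h * g)` is again in `𝓛(G, d)`, and `(g · f) h = f (h * g)` defines a continuous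
group action of `G` on `𝓛(G, d)`, making `𝓛(G, d)` a compact Polish `G`-space. -/
theorem lset_compact_polish_G_space {G : Type*} [Group G] [TopologicalSpace G]
    [IsTopologicalGroup G] [PolishSpace G]
    (d : G → G → ℝ)
    (hsymm : ∀ x y, d x y = d y x)
    (htri : ∀ x y z, d x z ≤ d x y + d y z)
    (hzero : ∀ x y, d x y = 0 ↔ x = y)
    (hcompat : ∀ s : Set G, IsOpen s ↔ ∀ x ∈ s, ∃ ε > 0, {y | d x y < ε} ⊆ s)
    (hinv : ∀ g h₁ h₂ : G, d (h₁ * g) (h₂ * g) = d h₁ h₂)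
    (hbdd : ∀ x y, d x y ≤ 1) :
    (∀ g : G, ∀ f ∈ LSet d, (fun h => f (h * g)) ∈ LSet d) ∧
    ∃ a : G → ↥(LSet d) → ↥(LSet d),
      (∀ (g : G) (f : ↥(LSet d)) (h : G), (a g f : G → ℝ) h = (f : G → ℝ) (h * g)) ∧
      (∀ f : ↥(LSet d), a 1 f = f) ∧
      (∀ (g₁ g₂ : G) (f : ↥(LSet d)), a (g₁ * g₂) f = a g₁ (a g₂ f)) ∧
      Continuous (fun p : G × ↥(LSet d) => a p.1 p.2) ∧
      CompactSpace ↥(LSet d) ∧ PolishSpace ↥(LSet d) := by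
  -- d-balls are neighborhoods
  have hball : ∀ (x : G) (ε : ℝ), 0 < ε → {y | d x y < ε} ∈ 𝓝 x := by
    intro x ε hε
    have hopen : IsOpen {y | d x y < ε} := by
      rw [hcompat]
      intro z hz
      refine ⟨ε - d x z, by simpa using hz, fun w hw => ?_⟩
      have h1 := htri x z w
      simp only [Set.mem_setOf_eq] at hz hw ⊢
      linarith
    exact hopen.mem_nhds (by simp [Set.mem_setOf_eq, (hzero x x).2 rfl, hε])
  -- closure under the action
  have hmem : ∀ g : G, ∀ f ∈ LSet d, (fun h => f (h * g)) ∈ LSet d := by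
    intro g f hf
    exact ⟨fun y => hf.1 _, fun y₁ y₂ => (hf.2 _ _).trans (le_of_eq (hinv g y₁ y₂))⟩
  -- closedness
  have hclosed : IsClosed (LSet d) := by
    have heq : LSet d = {f : G → ℝ | ∀ y, f y ∈ Set.Icc (0:ℝ) 1} ∩
        {f : G → ℝ | ∀ y₁ y₂, |f y₁ - f y₂| ≤ d y₁ y₂} := rfl
    rw [heq]
    apply IsClosed.inter
    · have : {f : G → ℝ | ∀ y, f y ∈ Set.Icc (0:ℝ) 1}
          = ⋂ y, (fun f : G → ℝ => f y) ⁻¹' Set.Icc 0 1 := by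
        ext f; simp
      rw [this]
      exact isClosed_iInter fun y => isClosed_Icc.preimage (continuous_apply y)
    · have : {f : G → ℝ | ∀ y₁ y₂, |f y₁ - f y₂| ≤ d y₁ y₂}
          = ⋂ y₁, ⋂ y₂, {f : G → ℝ | |f y₁ - f y₂| ≤ d y₁ y₂} := by
        ext f; simp
      rw [this]
      exact isClosed_iInter fun y₁ => isClosed_iInter fun y₂ =>
        isClosed_le (((continuous_apply y₁).sub (continuous_apply y₂)).abs) continuous_const
  -- compactness
  have hcompact : IsCompact (LSet d) := by
    have hpi : IsCompact (Set.pi Set.univ fun _ : G => Set.Icc (0:ℝ) 1) :=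
      isCompact_univ_pi fun _ => isCompact_Icc
    refine IsCompact.of_isClosed_subset hpi hclosed ?_
    intro f hf
    exact fun y _ => hf.1 y
  haveI hcs : CompactSpace ↥(LSet d) := isCompact_iff_compactSpace.mp hcompact
  -- members are continuous
  have hcontmem : ∀ f ∈ LSet d, Continuous f := by
    intro f hf
    rw [continuous_iff_continuousAt]
    intro x
    rw [ContinuousAt, Metric.tendsto_nhds]
    intro ε hε
    filter_upwards [hball x ε hε] with y hy
    have h1 : |f y - f x| ≤ d y x := hf.2 y x
    rw [Real.dist_eq]
    rw [hsymm y x] at h1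
    exact lt_of_le_of_lt h1 hy
  refine ⟨hmem, fun g f => ⟨fun h => (f : G → ℝ) (h * g), hmem g f f.2⟩,
    fun g f h => rfl, ?_, ?_, ?_, hcs, ?_⟩
  · intro f
    apply Subtype.ext; funext h
    show (f : G → ℝ) (h * 1) = (f : G → ℝ) h
    rw [mul_one]
  · intro g₁ g₂ f
    apply Subtype.ext; funext h
    show (f : G → ℝ) (h * (g₁ * g₂)) = (f : G → ℝ) (h * g₁ * g₂)
    rw [mul_assoc]
  · -- continuity of the action
    apply Continuous.subtype_mk
    apply continuous_pi
    intro h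
    rw [continuous_iff_continuousAt]
    rintro ⟨g₀, f₀⟩
    rw [ContinuousAt, Metric.tendsto_nhds]
    intro ε hε
    have hA : {p : G × ↥(LSet d) | d (h * g₀) (h * p.1) < ε / 2} ∈ 𝓝 (g₀, f₀) := by
      have hc : Continuous (fun p : G × ↥(LSet d) => h * p.1) :=
        continuous_const.mul continuous_fst
      have hb := hball (h * g₀) (ε / 2) (by linarith : (0:ℝ) < ε / 2)
      exact (hc.continuousAt (x := (g₀, f₀))) hb
    have hB : {p : G × ↥(LSet d) | |(p.2 : G → ℝ) (h * g₀) - (f₀ : G → ℝ) (h * g₀)| < ε / 2}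
        ∈ 𝓝 (g₀, f₀) := by
      have hc : Continuous (fun p : G × ↥(LSet d) => (p.2 : G → ℝ) (h * g₀)) :=
        (continuous_apply (h * g₀)).comp (continuous_subtype_val.comp continuous_snd)
      have := hc.continuousAt (x := (g₀, f₀)) (Metric.ball_mem_nhds ((f₀ : G → ℝ) (h * g₀))
        (show (0:ℝ) < ε / 2 by linarith))
      exact this
    filter_upwards [hA, hB] with p hpA hpB
    have hlip : |(p.2 : G → ℝ) (h * p.1) - (p.2 : G → ℝ) (h * g₀)| ≤ d (h * p.1) (h * g₀) :=
      p.2.2.2 _ _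
    rw [hsymm] at hpA
    rw [Real.dist_eq]
    have htr := abs_sub_le ((p.2 : G → ℝ) (h * p.1)) ((p.2 : G → ℝ) (h * g₀))
      ((f₀ : G → ℝ) (h * g₀))
    linarith
  · -- Polish
    obtain ⟨D, hDc, hDd⟩ := TopologicalSpace.exists_countable_dense G
    haveI : Countable D := hDc.to_subtype
    have hΦc : Continuous (fun f : ↥(LSet d) => fun x : D => (f : G → ℝ) (x : G)) :=
      continuous_pi fun x => (continuous_apply (x : G)).comp continuous_subtype_val
    have hΦi : Function.Injective (fun f : ↥(LSet d) => fun x : D => (f : G → ℝ) (x : G)) := by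
      intro f₁ f₂ hff
      apply Subtype.ext
      refine Continuous.ext_on hDd (hcontmem _ f₁.2) (hcontmem _ f₂.2) ?_
      intro x hx
      exact congrFun hff ⟨x, hx⟩
    exact (hΦc.isClosedEmbedding hΦi).polishSpace
end

section
/- Let G be a Polish group with right-invariant compatible metric d bounded by 1, let (X,τ) be a Polish G-space, and let 𝓞 ⊆ X be open. Then the graph {(x, φ^𝓞_x) : x ∈ X} is a Gδ subset (a countable intersection of open sets) of X × 𝓛(G,d) with the product topology. -/
open Topology
open scoped Classical

/-- `phi d O x h = inf {d h g : g • x ∈ O}` (with value `1` when `{g : g • x ∈ O}` is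
empty); i.e. the map `φ^𝓞 : X → 𝓛(G, d)`, `x ↦ φ^𝓞_x`. -/
noncomputable def phi {G X : Type*} [SMul G X] (d : G → G → ℝ) (O : Set X)
    (x : X) (h : G) : ℝ :=
  if {g : G | g • x ∈ O}.Nonempty then sInf ((fun g => d h g) '' {g : G | g • x ∈ O})
  else 1

section Aux

variable {G X : Type*} [SMul G X] {d : G → G → ℝ} {O : Set X}

lemma phi_le_of_mem (hd0 : ∀ a b, 0 ≤ d a b) {x : X} {g : G} (hg : g • x ∈ O) (h : G) :
    phi d O x h ≤ d h g := by
  unfold phi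
  rw [if_pos ⟨g, hg⟩]
  exact csInf_le ⟨0, by rintro b ⟨g', _, rfl⟩; exact hd0 h g'⟩ ⟨g, hg, rfl⟩

lemma phi_le_one (hd0 : ∀ a b, 0 ≤ d a b) (hbdd : ∀ a b, d a b ≤ 1) (x : X) (h : G) :
    phi d O x h ≤ 1 := by
  by_cases hne : {g : G | g • x ∈ O}.Nonempty
  · obtain ⟨g, hg⟩ := hne
    exact (phi_le_of_mem hd0 hg h).trans (hbdd h g)
  · unfold phi; rw [if_neg hne]

lemma phi_lt_iff (hd0 : ∀ a b, 0 ≤ d a b) (hbdd : ∀ a b, d a b ≤ 1) (x : X) (h : G) (t : ℝ) :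
    phi d O x h < t ↔ 1 < t ∨ ∃ g, g • x ∈ O ∧ d h g < t := by
  constructor
  · intro hlt
    by_cases hne : {g : G | g • x ∈ O}.Nonempty
    · right
      have hb : BddBelow ((fun g => d h g) '' {g : G | g • x ∈ O}) :=
        ⟨0, by rintro b ⟨g', _, rfl⟩; exact hd0 h g'⟩
      have : phi d O x h = sInf ((fun g => d h g) '' {g : G | g • x ∈ O}) := by
        unfold phi; rw [if_pos hne]
      rw [this] at hlt
      obtain ⟨b, hb', hblt⟩ := (csInf_lt_iff hb (hne.image _)).mp hlt
      obtain ⟨g, hg, rfl⟩ := hb'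
      exact ⟨g, hg, hblt⟩
    · left
      have : phi d O x h = 1 := by unfold phi; rw [if_neg hne]
      rwa [this] at hlt
  · rintro (h1 | ⟨g, hg, hlt⟩)
    · exact lt_of_le_of_lt (phi_le_one hd0 hbdd x h) h1
    · exact lt_of_le_of_lt (phi_le_of_mem hd0 hg h) hlt

lemma phi_lipschitz (hd0 : ∀ a b, 0 ≤ d a b) (htri : ∀ a b c, d a c ≤ d a b + d b c)
    (x : X) (h₁ h₂ : G) : phi d O x h₁ ≤ phi d O x h₂ + d h₁ h₂ := by
  by_cases hne : {g : G | g • x ∈ O}.Nonempty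
  · have h2 : phi d O x h₂ = sInf ((fun g => d h₂ g) '' {g : G | g • x ∈ O}) := by
      unfold phi; rw [if_pos hne]
    rw [h2]
    have key : phi d O x h₁ - d h₁ h₂ ≤ sInf ((fun g => d h₂ g) '' {g : G | g • x ∈ O}) := by
      refine le_csInf (hne.image _) ?_
      rintro b ⟨g, hg, rfl⟩
      have h1 := phi_le_of_mem (O := O) hd0 hg h₁
      have h2 := htri h₁ h₂ g
      linarith
    linarith
  · have h1 : phi d O x h₁ = 1 := by unfold phi; rw [if_neg hne]
    have h2 : phi d O x h₂ = 1 := by unfold phi; rw [if_neg hne]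
    rw [h1, h2]
    have := hd0 h₁ h₂
    linarith

/-- Preimage of a Gδ set under a continuous map is Gδ. -/
lemma isGδ_preimage {α β : Type*} [TopologicalSpace α] [TopologicalSpace β]
    {f : α → β} (hf : Continuous f) {s : Set β} (hs : IsGδ s) : IsGδ (f ⁻¹' s) := by
  obtain ⟨T, hTo, hTc, rfl⟩ := hs
  rw [Set.preimage_sInter]
  exact .biInter hTc fun t ht => ((hTo t ht).preimage hf).isGδ

end Aux

/-- Let `G` be a Polish group with right-invariant compatible metric `d`
bounded by `1`, `(X, τ)` a Polish `G`-space, and `𝓞 ⊆ X` open. Then the graph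
`{(x, φ^𝓞_x) : x ∈ X}` is a Gδ subset of `X × 𝓛(G, d)` with the product topology. -/
theorem graph_phi_Gdelta {G X : Type*} [Group G] [TopologicalSpace G]
    [IsTopologicalGroup G] [PolishSpace G]
    [TopologicalSpace X] [PolishSpace X] [MulAction G X] [ContinuousSMul G X]
    (d : G → G → ℝ)
    (hsymm : ∀ x y, d x y = d y x)
    (htri : ∀ x y z, d x z ≤ d x y + d y z)
    (hzero : ∀ x y, d x y = 0 ↔ x = y)
    (hcompat : ∀ s : Set G, IsOpen s ↔ ∀ x ∈ s, ∃ ε > 0, {y | d x y < ε} ⊆ s)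
    (hinv : ∀ g h₁ h₂ : G, d (h₁ * g) (h₂ * g) = d h₁ h₂)
    (hbdd : ∀ x y, d x y ≤ 1)
    (O : Set X) (hO : IsOpen O) :
    IsGδ {p : X × ↥(LSet d) | ∀ h : G, (p.2 : G → ℝ) h = phi d O p.1 h} := by
  classical
  -- nonnegativity of d
  have hd0 : ∀ a b, 0 ≤ d a b := by
    intro a b
    have h1 := htri a b a
    have h2 : d a a = 0 := (hzero a a).mpr rfl
    have h3 : d b a = d a b := hsymm b a
    linarith
  -- countable dense subset of G
  obtain ⟨D, hDc, hDd⟩ := TopologicalSpace.exists_countable_dense G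
  -- balls are open and dense set meets them
  have hball : ∀ (h : G) (ε : ℝ), 0 < ε → ∃ g ∈ D, d h g < ε := by
    intro h ε hε
    have hop : IsOpen {y | d h y < ε} := by
      rw [hcompat]
      intro x hx
      refine ⟨ε - d h x, by simp only [Set.mem_setOf_eq] at hx; linarith, ?_⟩
      intro y hy
      simp only [Set.mem_setOf_eq] at hx hy ⊢
      have := htri h x y
      linarith
    obtain ⟨g, hgD, hg⟩ := hDd.exists_mem_open hop
      ⟨h, by simp only [Set.mem_setOf_eq, (hzero h h).mpr rfl]; exact hε⟩
    exact ⟨g, hgD, hg⟩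
  -- continuity of evaluation and action
  have hev : ∀ g : G, Continuous fun p : X × ↥(LSet d) => (p.2 : G → ℝ) g := fun g =>
    (continuous_apply g).comp (continuous_subtype_val.comp continuous_snd)
  have hact : ∀ g : G, Continuous fun p : X × ↥(LSet d) => g • p.1 := fun g =>
    continuous_fst.const_smul g
  -- the open pieces
  set U : G → ℕ → Set (X × ↥(LSet d)) := fun h n =>
    {p | 1 < (p.2 : G → ℝ) h + ((n : ℝ) + 1)⁻¹} ∪
      ⋃ g : G, {p | g • p.1 ∈ O} ∩ {p | d h g < (p.2 : G → ℝ) h + ((n : ℝ) + 1)⁻¹} with hU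
  have hUopen : ∀ h n, IsOpen (U h n) := by
    intro h n
    apply IsOpen.union
    · exact isOpen_lt continuous_const ((hev h).add continuous_const)
    · exact isOpen_iUnion fun g =>
        ((hO.preimage (hact g)).inter
          (isOpen_lt continuous_const ((hev h).add continuous_const)))
  have hUmem : ∀ (p : X × ↥(LSet d)) h n,
      p ∈ U h n ↔ phi d O p.1 h < (p.2 : G → ℝ) h + ((n : ℝ) + 1)⁻¹ := by
    intro p h n
    rw [phi_lt_iff hd0 hbdd]
    simp only [hU, Set.mem_union, Set.mem_setOf_eq, Set.mem_iUnion, Set.mem_inter_iff]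
  -- the Gδ pieces for the "f ≤ phi" direction
  set C : G → Set (X × ↥(LSet d)) := fun g =>
    {p | g • p.1 ∈ O → (p.2 : G → ℝ) g ≤ 0} with hC
  have hCGδ : ∀ g, IsGδ (C g) := by
    intro g
    have heq : C g = ((fun p : X × ↥(LSet d) => g • p.1) ⁻¹' Oᶜ) ∪
        ⋂ n : ℕ, {p : X × ↥(LSet d) | (p.2 : G → ℝ) g < ((n : ℝ) + 1)⁻¹} := by
      ext p
      simp only [hC, Set.mem_setOf_eq, Set.mem_union, Set.mem_preimage, Set.mem_compl_iff,
        Set.mem_iInter]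
      constructor
      · intro hp
        by_cases hgx : g • p.1 ∈ O
        · right
          intro n
          have hn : (0 : ℝ) < ((n : ℝ) + 1)⁻¹ := by positivity
          exact lt_of_le_of_lt (hp hgx) hn
        · left; exact hgx
      · rintro (hp | hp) hgx
        · exact absurd hgx hp
        · by_contra hle
          push_neg at hle
          obtain ⟨n, hn⟩ := exists_nat_one_div_lt hle
          rw [one_div] at hn
          exact absurd (hp n) (not_lt.mpr hn.le)
    rw [heq]
    letI := TopologicalSpace.upgradeIsCompletelyMetrizable X
    refine IsGδ.union ?_ ?_
    · exact isGδ_preimage (hact g) hO.isClosed_compl.isGδ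
    · exact .iInter fun n => (isOpen_lt (hev g) continuous_const).isGδ
  -- main set equality
  have hmain : {p : X × ↥(LSet d) | ∀ h : G, (p.2 : G → ℝ) h = phi d O p.1 h} =
      (⋂ g ∈ D, C g) ∩ ⋂ h ∈ D, ⋂ n : ℕ, U h n := by
    ext ⟨x, f⟩
    obtain ⟨hf01, hfL⟩ := f.2
    simp only [Set.mem_setOf_eq, Set.mem_inter_iff, Set.mem_iInter]
    constructor
    · intro heq
      refine ⟨fun g _ hgx => ?_, fun h _ n => ?_⟩
      · have h1 : (f : G → ℝ) g = phi d O x g := heq g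
        have h2 : phi d O x g ≤ d g g := phi_le_of_mem hd0 hgx g
        rw [(hzero g g).mpr rfl] at h2
        rw [h1]; exact h2
      · rw [hUmem, heq h]
        have hn : (0 : ℝ) < ((n : ℝ) + 1)⁻¹ := by positivity
        linarith
    · rintro ⟨hCm, hUm⟩
      -- step 1: f vanishes on all of {g | g • x ∈ O}
      have hC' : ∀ g : G, g • x ∈ O → (f : G → ℝ) g ≤ 0 := by
        intro g hgx
        by_contra hpos
        push_neg at hpos
        have hop : IsOpen {g' : G | g' • x ∈ O} :=
          hO.preimage (continuous_id.smul continuous_const)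
        rw [hcompat] at hop
        obtain ⟨δ, hδ, hsub⟩ := hop g hgx
        obtain ⟨g', hg'D, hg'⟩ := hball g (min δ ((f : G → ℝ) g)) (lt_min hδ hpos)
        have hg'O : g' • x ∈ O := hsub (lt_of_lt_of_le hg' (min_le_left _ _))
        have hlip := hfL g g'
        have habs := abs_sub_le_iff.mp hlip
        have : (0 : ℝ) < (f : G → ℝ) g' := by
          have := hg'.trans_le (min_le_right _ _)
          linarith [habs.1]
        exact absurd (hCm g' hg'D hg'O) (not_le.mpr this)
      -- step 2: f ≤ phi everywhere
      have hle : ∀ h : G, (f : G → ℝ) h ≤ phi d O x h := by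
        intro h
        by_cases hne : {g : G | g • x ∈ O}.Nonempty
        · have hphi : phi d O x h = sInf ((fun g => d h g) '' {g : G | g • x ∈ O}) := by
            unfold phi; rw [if_pos hne]
          rw [hphi]
          refine le_csInf (hne.image _) ?_
          rintro b ⟨g, hg, rfl⟩
          have h1 := (abs_sub_le_iff.mp (hfL h g)).1
          have h2 := hC' g hg
          linarith
        · have hphi : phi d O x h = 1 := by unfold phi; rw [if_neg hne]
          rw [hphi]
          exact (hf01 h).2
      -- step 3: phi ≤ f on D
      have hgeD : ∀ h ∈ D, phi d O x h ≤ (f : G → ℝ) h := by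
        intro h hhD
        by_contra hlt
        push_neg at hlt
        obtain ⟨n, hn⟩ := exists_nat_one_div_lt (sub_pos.mpr hlt)
        rw [one_div] at hn
        have := (hUmem (⟨x, f⟩ : X × ↥(LSet d)) h n).mp (hUm h hhD n)
        simp only at this
        linarith
      -- step 4: phi ≤ f everywhere
      have hge : ∀ h : G, phi d O x h ≤ (f : G → ℝ) h := by
        intro h
        by_contra hlt
        push_neg at hlt
        set ε := (phi d O x h - (f : G → ℝ) h) / 3 with hε
        have hεpos : 0 < ε := by simp only [hε]; linarith
        obtain ⟨h', hh'D, hh'⟩ := hball h ε hεpos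
        have hlip1 : phi d O x h ≤ phi d O x h' + d h h' :=
          phi_lipschitz hd0 htri x h h'
        have hlip2 := (abs_sub_le_iff.mp (hfL h' h)).1
        have h3 := hgeD h' hh'D
        rw [hsymm h' h] at hlip2
        linarith
      intro h
      exact le_antisymm (hle h) (hge h)
  rw [hmain]
  haveI : Countable ↥D := hDc.to_subtype
  exact IsGδ.inter (.biInter hDc fun g _ => hCGδ g)
    (.biInter hDc fun h _ => .iInter fun n => (hUopen h n).isGδ)
end

section
/- Let G be a Polish group with right-invariant compatible metric d bounded by 1, let (X,τ) be a Polish G-space, and let 𝓞 ⊆ X be open. Then for every g ∈ G and rational q > 0, the set {x ∈ X : φ^𝓞_x(g) > q} is Fσ in (X,τ) and the set {x ∈ X : φ^𝓞_x(g) < q} is open in (X,τ). Consequently, the preimage under φ^𝓞 : X → 𝓛(G,d) of every open subset of 𝓛(G,d) is Fσ in (X,τ). -/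
open Topology
open scoped Classical

/-- A set is Fσ if it is a countable union of closed sets. -/
def IsFSigma {X : Type*} [TopologicalSpace X] (s : Set X) : Prop :=
  ∃ F : ℕ → Set X, (∀ n, IsClosed (F n)) ∧ s = ⋃ n, F n

section helpers
variable {Y : Type*} [TopologicalSpace Y]

lemma isFSigma_of_closed {s : Set Y} (h : IsClosed s) : IsFSigma s :=
  ⟨fun _ => s, fun _ => h, (Set.iUnion_const s).symm⟩

lemma isFSigma_empty : IsFSigma (∅ : Set Y) := isFSigma_of_closed isClosed_empty

lemma isFSigma_iUnion {ι : Sort*} [Countable ι] {s : ι → Set Y}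
    (h : ∀ i, IsFSigma (s i)) : IsFSigma (⋃ i, s i) := by
  cases isEmpty_or_nonempty ι with
  | inl hι => rw [Set.iUnion_of_empty]; exact isFSigma_empty
  | inr hι =>
    obtain ⟨g, hg⟩ := exists_surjective_nat ι
    choose F hFc hFu using h
    refine ⟨fun n => F (g (Nat.unpair n).1) (Nat.unpair n).2, fun n => hFc _ _, ?_⟩
    ext x
    simp only [Set.mem_iUnion]
    constructor
    · rintro ⟨i, hi⟩
      obtain ⟨n, rfl⟩ := hg i
      rw [hFu] at hi
      obtain ⟨m, hm⟩ := Set.mem_iUnion.1 hi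
      exact ⟨Nat.pair n m, by rwa [Nat.unpair_pair]⟩
    · rintro ⟨n, hn⟩
      exact ⟨g (Nat.unpair n).1, by rw [hFu]; exact Set.mem_iUnion.2 ⟨_, hn⟩⟩

lemma isFSigma_inter {s t : Set Y} (hs : IsFSigma s) (ht : IsFSigma t) :
    IsFSigma (s ∩ t) := by
  obtain ⟨F, hFc, rfl⟩ := hs
  obtain ⟨T, hTc, rfl⟩ := ht
  refine ⟨fun n => F (Nat.unpair n).1 ∩ T (Nat.unpair n).2,
    fun n => (hFc _).inter (hTc _), ?_⟩
  ext x
  simp only [Set.mem_inter_iff, Set.mem_iUnion]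
  constructor
  · rintro ⟨⟨n, hn⟩, ⟨m, hm⟩⟩
    exact ⟨Nat.pair n m, by rw [Nat.unpair_pair]; exact ⟨hn, hm⟩⟩
  · rintro ⟨n, hn, hm⟩
    exact ⟨⟨_, hn⟩, ⟨_, hm⟩⟩

lemma isFSigma_univ : IsFSigma (Set.univ : Set Y) := isFSigma_of_closed isClosed_univ

lemma isFSigma_biInter_finset {α : Type*} (σ : Finset α) {s : α → Set Y}
    (h : ∀ a ∈ σ, IsFSigma (s a)) : IsFSigma (⋂ a ∈ σ, s a) := by
  classical
  induction σ using Finset.induction with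
  | empty => simp only [Finset.notMem_empty, Set.iInter_of_empty, Set.iInter_univ]
             exact isFSigma_univ
  | @insert a σ' _ ih =>
    rw [Finset.set_biInter_insert]
    exact isFSigma_inter (h a (Finset.mem_insert_self a σ'))
      (ih fun b hb => h b (Finset.mem_insert_of_mem hb))

end helpers

lemma isOpen_isFSigma_metric {Y : Type*} [MetricSpace Y] {U : Set Y} (hU : IsOpen U) :
    IsFSigma U := by
  refine ⟨fun n => ⋂ y ∈ Uᶜ, {x | (1:ℝ)/(n+1) ≤ dist x y}, fun n => ?_, ?_⟩
  · exact isClosed_biInter fun y _ =>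
      isClosed_le continuous_const (continuous_id.dist continuous_const)
  · ext x
    simp only [Set.mem_iUnion, Set.mem_iInter, Set.mem_setOf_eq, Set.mem_compl_iff]
    constructor
    · intro hx
      obtain ⟨ε, hε, hball⟩ := Metric.isOpen_iff.1 hU x hx
      obtain ⟨n, hn⟩ := exists_nat_one_div_lt hε
      refine ⟨n, fun y hy => ?_⟩
      by_contra hlt
      exact hy (hball (by rw [Metric.mem_ball, dist_comm]; linarith))
    · rintro ⟨n, hn⟩
      by_contra hx
      have : (0:ℝ) < 1/(n+1) := by positivity
      linarith [hn x hx, dist_self x]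

lemma isOpen_isFSigma {Y : Type*} [TopologicalSpace Y] [TopologicalSpace.MetrizableSpace Y]
    {U : Set Y} (hU : IsOpen U) : IsFSigma U := by
  letI := TopologicalSpace.metrizableSpaceMetric Y
  exact isOpen_isFSigma_metric hU

/-- the basic open sets of pointwise convergence on the range of `e`, with rational bounds. -/
def basicSet {G : Type*} (e : ℕ → G) (σ : Finset (ℕ × ℚ × ℚ)) : Set (G → ℝ) :=
  {f | ∀ t ∈ σ, (t.2.1 : ℝ) < f (e t.1) ∧ f (e t.1) < (t.2.2 : ℝ)}

/-- Let `G` be a Polish group with right-invariant compatible metric `d`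
bounded by `1`, `(X, τ)` a Polish `G`-space, and `𝓞 ⊆ X` open. Then for every `g ∈ G` and
rational `q > 0`, the set `{x : φ^𝓞_x g > q}` is Fσ in `(X, τ)` and the set
`{x : φ^𝓞_x g < q}` is open in `(X, τ)`. Consequently — since the topology of `𝓛(G, d)`
is induced by the product topology on `G → ℝ` — the preimage under `φ^𝓞` of every open
subset of `𝓛(G, d)` is Fσ in `(X, τ)`. -/
theorem phi_baire_class_one {G X : Type*} [Group G] [TopologicalSpace G]
    [IsTopologicalGroup G] [PolishSpace G]
    [TopologicalSpace X] [PolishSpace X] [MulAction G X] [ContinuousSMul G X]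
    (d : G → G → ℝ)
    (hsymm : ∀ x y, d x y = d y x)
    (htri : ∀ x y z, d x z ≤ d x y + d y z)
    (hzero : ∀ x y, d x y = 0 ↔ x = y)
    (hcompat : ∀ s : Set G, IsOpen s ↔ ∀ x ∈ s, ∃ ε > 0, {y | d x y < ε} ⊆ s)
    (hinv : ∀ g h₁ h₂ : G, d (h₁ * g) (h₂ * g) = d h₁ h₂)
    (hbdd : ∀ x y, d x y ≤ 1)
    (O : Set X) (hO : IsOpen O) :
    (∀ (g : G) (q : ℚ), 0 < q →
      IsFSigma {x : X | (q : ℝ) < phi d O x g} ∧ IsOpen {x : X | phi d O x g < (q : ℝ)}) ∧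
    (∀ W : Set (G → ℝ), IsOpen W → IsFSigma {x : X | phi d O x ∈ W}) := by
  classical
  have dself : ∀ x : G, d x x = 0 := fun x => (hzero x x).mpr rfl
  have dnn : ∀ x y : G, 0 ≤ d x y := by
    intro x y
    have h := htri x y x
    rw [dself x, hsymm y x] at h
    linarith
  have hbb : ∀ (x : X) (h : G), BddBelow ((fun g => d h g) '' {g : G | g • x ∈ O}) :=
    fun x h => ⟨0, by rintro y ⟨g, _, rfl⟩; exact dnn h g⟩
  have phi_nonneg : ∀ (x : X) (h : G), 0 ≤ phi d O x h := by
    intro x h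
    unfold phi
    split_ifs with hne
    · exact le_csInf (hne.image _) (by rintro y ⟨g, _, rfl⟩; exact dnn h g)
    · norm_num
  have phi_le_one : ∀ (x : X) (h : G), phi d O x h ≤ 1 := by
    intro x h
    unfold phi
    split_ifs with hne
    · obtain ⟨g, hg⟩ := hne
      exact le_trans (csInf_le (hbb x h) ⟨g, hg, rfl⟩) (hbdd h g)
    · exact le_refl _
  -- openness of sublevel sets
  have open_lt : ∀ (g : G) (c : ℝ), IsOpen {x : X | phi d O x g < c} := by
    intro g c
    have hset : {x : X | phi d O x g < c} =
        (⋃ g' ∈ {g' : G | d g g' < c}, (fun x : X => g' • x) ⁻¹' O) ∪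
          {x : X | (1:ℝ) < c} := by
      ext x
      simp only [Set.mem_setOf_eq, Set.mem_union, Set.mem_iUnion, Set.mem_preimage]
      constructor
      · intro hx
        unfold phi at hx
        split_ifs at hx with hne
        · left
          obtain ⟨y, ⟨g', hg', rfl⟩, hy⟩ := (csInf_lt_iff (hbb x g) (hne.image _)).1 hx
          exact ⟨g', hy, hg'⟩
        · right; exact hx
      · rintro (⟨g', hlt, hmem⟩ | h1)
        · unfold phi
          rw [if_pos ⟨g', hmem⟩]
          exact lt_of_le_of_lt (csInf_le (hbb x g) ⟨g', hmem, rfl⟩) hlt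
        · exact lt_of_le_of_lt (phi_le_one x g) h1
    rw [hset]
    apply IsOpen.union
    · exact isOpen_biUnion fun g' _ => hO.preimage (continuous_const_smul g')
    · by_cases h1 : (1:ℝ) < c
      · have : {x : X | (1:ℝ) < c} = Set.univ := by ext x; simp [h1]
        rw [this]; exact isOpen_univ
      · have : {x : X | (1:ℝ) < c} = ∅ := by ext x; simp [h1]
        rw [this]; exact isOpen_empty
  have closed_ge : ∀ (g : G) (c : ℝ), IsClosed {x : X | c ≤ phi d O x g} := by
    intro g c
    have : {x : X | c ≤ phi d O x g} = {x : X | phi d O x g < c}ᶜ := by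
      ext x; simp [not_lt]
    rw [this]
    exact (open_lt g c).isClosed_compl
  have fsigma_gt : ∀ (g : G) (a : ℝ), IsFSigma {x : X | a < phi d O x g} := by
    intro g a
    refine ⟨fun n => {x : X | a + 1/(n+1) ≤ phi d O x g}, fun n => closed_ge g _, ?_⟩
    ext x
    simp only [Set.mem_setOf_eq, Set.mem_iUnion]
    constructor
    · intro hx
      obtain ⟨n, hn⟩ := exists_nat_one_div_lt (sub_pos.2 hx)
      exact ⟨n, by linarith⟩
    · rintro ⟨n, hn⟩
      have : (0:ℝ) < 1/((n:ℝ)+1) := by positivity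
      linarith
  refine ⟨fun g q hq => ⟨fsigma_gt g q, open_lt g q⟩, ?_⟩
  -- part 2
  have phi_lip : ∀ (x : X) (h₁ h₂ : G), |phi d O x h₁ - phi d O x h₂| ≤ d h₁ h₂ := by
    intro x h₁ h₂
    have key : ∀ a b : G, phi d O x a ≤ d a b + phi d O x b := by
      intro a b
      unfold phi
      split_ifs with hne
      · rw [← sub_le_iff_le_add']
        apply le_csInf (hne.image _)
        rintro y ⟨g', hg', rfl⟩
        rw [sub_le_iff_le_add']
        exact le_trans (csInf_le (hbb x a) ⟨g', hg', rfl⟩) (htri a b g')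
      · linarith [dnn a b]
    rw [abs_sub_le_iff]
    constructor
    · linarith [key h₁ h₂]
    · have := key h₂ h₁
      rw [hsymm h₂ h₁] at this
      linarith
  have ball_open : ∀ (g : G) (ε : ℝ), 0 < ε → IsOpen {y : G | d g y < ε} := by
    intro g ε hε
    rw [hcompat]
    intro x hx
    simp only [Set.mem_setOf_eq] at hx
    refine ⟨ε - d g x, sub_pos.2 hx, ?_⟩
    intro y hy
    simp only [Set.mem_setOf_eq] at hy ⊢
    calc d g y ≤ d g x + d x y := htri g x y
      _ < ε := by linarith
  haveI : Nonempty G := ⟨1⟩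
  obtain ⟨e, he⟩ := TopologicalSpace.exists_dense_seq G
  have hdense : ∀ (g : G) (ε : ℝ), 0 < ε → ∃ n : ℕ, d g (e n) < ε := by
    intro g ε hε
    have hne : {y : G | d g y < ε}.Nonempty := ⟨g, by simpa [dself g] using hε⟩
    obtain ⟨n, hn⟩ := he.exists_mem_open (ball_open g ε hε) hne
    exact ⟨n, hn⟩
  intro W hW
  set L : Set (G → ℝ) := {f | ∀ h₁ h₂ : G, |f h₁ - f h₂| ≤ d h₁ h₂} with hL
  have phi_mem_L : ∀ x : X, phi d O x ∈ L := fun x h₁ h₂ => phi_lip x h₁ h₂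
  have hEq : {x : X | phi d O x ∈ W} =
      ⋃ (σ : {σ : Finset (ℕ × ℚ × ℚ) // basicSet e σ ∩ L ⊆ W}),
        {x : X | phi d O x ∈ basicSet e σ.1} := by
    ext x
    simp only [Set.mem_setOf_eq, Set.mem_iUnion]
    constructor
    · intro hx
      obtain ⟨I, u, hu, hIu⟩ := isOpen_pi_iff.1 hW (phi d O x) hx
      have hball : ∀ g ∈ I, ∃ ε > 0, Metric.ball (phi d O x g) ε ⊆ u g :=
        fun g hg => Metric.isOpen_iff.1 (hu g hg).1 _ (hu g hg).2
      choose! ε hεpos hεball using hball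
      have hnn : ∀ g ∈ I, ∃ n : ℕ, d g (e n) < ε g / 4 :=
        fun g hg => hdense g _ (by linarith [hεpos g hg])
      choose! n hn using hnn
      have haa : ∀ g ∈ I, ∃ a : ℚ,
          phi d O x (e (n g)) - ε g / 4 < (a:ℝ) ∧ (a:ℝ) < phi d O x (e (n g)) := by
        intro g hg
        obtain ⟨a, ha1, ha2⟩ := exists_rat_btwn
          (show phi d O x (e (n g)) - ε g / 4 < phi d O x (e (n g)) by
            linarith [hεpos g hg])
        exact ⟨a, ha1, ha2⟩
      choose! a ha1 ha2 using haa
      have hbbq : ∀ g ∈ I, ∃ b : ℚ,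
          phi d O x (e (n g)) < (b:ℝ) ∧ (b:ℝ) < phi d O x (e (n g)) + ε g / 4 := by
        intro g hg
        obtain ⟨b, hb1, hb2⟩ := exists_rat_btwn
          (show phi d O x (e (n g)) < phi d O x (e (n g)) + ε g / 4 by
            linarith [hεpos g hg])
        exact ⟨b, hb1, hb2⟩
      choose! b hb1 hb2 using hbbq
      refine ⟨⟨I.image fun g => (n g, a g, b g), ?_⟩, ?_⟩
      · rintro f' ⟨hf'B, hf'L⟩
        apply hIu
        rw [Set.mem_pi]
        intro g hg
        rw [Finset.mem_coe] at hg
        have ht : (n g, a g, b g) ∈ I.image fun g => (n g, a g, b g) :=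
          Finset.mem_image_of_mem _ hg
        obtain ⟨h1, h2⟩ := hf'B _ ht
        apply hεball g hg
        rw [Metric.mem_ball, Real.dist_eq]
        have l1 : |f' g - f' (e (n g))| ≤ d g (e (n g)) := hf'L g (e (n g))
        have l2 : |phi d O x (e (n g)) - phi d O x g| ≤ d (e (n g)) g :=
          phi_lip x (e (n g)) g
        rw [hsymm (e (n g)) g] at l2
        have hd : d g (e (n g)) < ε g / 4 := hn g hg
        have e3 : |f' (e (n g)) - phi d O x (e (n g))| < ε g / 4 := by
          rw [abs_sub_lt_iff]
          constructor <;> [linarith [hb2 g hg, h2]; linarith [ha1 g hg, h1]]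
        have e1 := abs_sub_le (f' g) (f' (e (n g))) (phi d O x g)
        have e2 := abs_sub_le (f' (e (n g))) (phi d O x (e (n g))) (phi d O x g)
        calc |f' g - phi d O x g|
            ≤ |f' g - f' (e (n g))| + |f' (e (n g)) - phi d O x g| := e1
          _ < ε g := by linarith [hεpos g hg]
      · intro t ht
        obtain ⟨g, hg, rfl⟩ := Finset.mem_image.1 ht
        exact ⟨ha2 g hg, hb1 g hg⟩
    · rintro ⟨⟨σ, hσ⟩, hxσ⟩
      exact hσ ⟨hxσ, phi_mem_L x⟩
  rw [hEq]
  apply isFSigma_iUnion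
  rintro ⟨σ, -⟩
  have hrw : {x : X | phi d O x ∈ basicSet e σ} =
      ⋂ t ∈ σ, ({x : X | (t.2.1:ℝ) < phi d O x (e t.1)} ∩
        {x : X | phi d O x (e t.1) < (t.2.2:ℝ)}) := by
    ext x
    simp only [basicSet, Set.mem_setOf_eq, Set.mem_iInter, Set.mem_inter_iff]
  rw [hrw]
  exact isFSigma_biInter_finset σ fun t _ =>
    isFSigma_inter (fsigma_gt _ _) (isOpen_isFSigma (open_lt _ _))
end

section
/- For every Polish group G there exists a compact Polish G-space 𝓤_G which is universal for Borel G-embeddings: every Polish G-space X admits an injective Borel G-mapping into 𝓤_G, i.e. an injective map π : X → 𝓤_G with π(g·x) = g·π(x) for all g ∈ G, x ∈ X, such that the preimage under π of every open set is Borel in X. -/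
open Topology Set Filter Pointwise NNReal

private lemma exists_invariant_dist {G : Type*} [Group G] [TopologicalSpace G]
    [IsTopologicalGroup G] [FirstCountableTopology G] :
    ∃ D : G → G → ℝ,
      (∀ g h, 0 ≤ D g h) ∧ (∀ g h, D g h ≤ 1) ∧ (∀ g, D g g = 0) ∧
      (∀ g h, D g h = D h g) ∧ (∀ g h k, D g k ≤ D g h + D h k) ∧
      (∀ a g h, D (a * g) (a * h) = D g h) ∧
      (∀ ε : ℝ, 0 < ε → {k : G | D 1 k < ε} ∈ 𝓝 (1 : G)) ∧
      (∀ V ∈ 𝓝 (1 : G), ∃ ε : ℝ, 0 < ε ∧ {k : G | D 1 k < ε} ⊆ V) := by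
  classical
  obtain ⟨B, hB⟩ := (𝓝 (1 : G)).exists_antitone_basis
  have key : ∀ S ∈ 𝓝 (1 : G), ∃ T ∈ 𝓝 (1 : G), T⁻¹ = T ∧ T * T * T ⊆ S := by
    intro S hS
    obtain ⟨V, hVo, hV1, hVV⟩ := exists_open_nhds_one_mul_subset hS
    obtain ⟨V', hV'o, hV'1, hV'V⟩ := exists_open_nhds_one_mul_subset (hVo.mem_nhds hV1)
    refine ⟨(V' ∩ V) ∩ ((V' ∩ V))⁻¹, ?_, by simp [Set.inter_comm], ?_⟩
    · exact Filter.inter_mem ((hV'o.inter hVo).mem_nhds ⟨hV'1, hV1⟩)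
        (((hV'o.inter hVo).preimage continuous_inv).mem_nhds (by simp [hV'1, hV1]))
    · intro x hx
      rw [Set.mem_mul] at hx
      obtain ⟨y, hy, z, hz, rfl⟩ := hx
      rw [Set.mem_mul] at hy
      obtain ⟨a, ha, b, hb, rfl⟩ := hy
      exact hVV (Set.mul_mem_mul (hV'V (Set.mul_mem_mul ha.1.1 hb.1.1)) hz.1.2)
  choose T hT1 hTsymm hTmul using key
  let W0 : ℕ → {S : Set G // S ∈ 𝓝 (1 : G)} := fun n =>
    Nat.rec ⟨T univ univ_mem, hT1 _ _⟩
      (fun n p => ⟨T (p.1 ∩ B n) (Filter.inter_mem p.2 (hB.mem n)), hT1 _ _⟩) n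
  let W : ℕ → Set G := fun n => (W0 n).1
  have hWmem : ∀ n, W n ∈ 𝓝 (1 : G) := fun n => (W0 n).2
  have hW1 : ∀ n, (1 : G) ∈ W n := fun n => mem_of_mem_nhds (hWmem n)
  have hWsymm : ∀ n, (W n)⁻¹ = W n := by
    intro n; cases n with
    | zero => exact hTsymm _ _
    | succ m => exact hTsymm _ _
  have hWsucc : ∀ n, W (n + 1) * W (n + 1) * W (n + 1) ⊆ W n ∩ B n := fun n => hTmul _ _
  have hWcube : ∀ n, W (n + 1) * W (n + 1) * W (n + 1) ⊆ W n := fun n =>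
    (hWsucc n).trans inter_subset_left
  have hWtriple : ∀ n x, x ∈ W (n+1) → x ∈ W n ∩ B n := by
    intro n x hx
    have h1 : (1:G) ∈ W (n+1) := hW1 (n+1)
    have hmem : x * 1 * 1 ∈ W (n+1) * W (n+1) * W (n+1) :=
      Set.mul_mem_mul (Set.mul_mem_mul hx h1) h1
    simpa using hWsucc n hmem
  have hWB : ∀ n, W (n + 1) ⊆ B n := fun n x hx => (hWtriple n x hx).2
  have hWanti : ∀ n, W (n + 1) ⊆ W n := fun n x hx => (hWtriple n x hx).1
  have hWanti' : Antitone W := antitone_nat_of_succ_le hWanti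
  have hWbasis : ∀ S ∈ 𝓝 (1 : G), ∃ n, W n ⊆ S := by
    intro S hS
    obtain ⟨n, -, hn⟩ := hB.toHasBasis.mem_iff.mp hS
    exact ⟨n + 1, (hWB n).trans hn⟩
  set δ : G → ℝ≥0 := fun k => if h : ∃ n, k ∉ W n then (1 / 2) ^ Nat.find h else 0 with hδdef
  set d : G → G → ℝ≥0 := fun g h => δ (g⁻¹ * h) with hddef
  have hr : (1 / 2 : ℝ≥0) ∈ Set.Ioo (0 : ℝ≥0) 1 :=
    ⟨half_pos one_pos, NNReal.half_lt_self one_ne_zero⟩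
  have hδ1 : ∀ k, δ k ≤ 1 := by
    intro k
    simp only [hδdef]
    split_ifs with h
    · exact pow_le_one₀ zero_le hr.2.le
    · exact zero_le_one
  have hδe : δ (1 : G) = 0 := by
    simp only [hδdef]
    rw [dif_neg]
    push_neg
    exact hW1
  have hδsymm : ∀ k, δ k⁻¹ = δ k := by
    intro k
    have hiff : ∀ n, k⁻¹ ∉ W n ↔ k ∉ W n := by
      intro n
      rw [not_iff_not]
      constructor
      · intro h; have := Set.inv_mem_inv.mpr h; rwa [hWsymm, inv_inv] at this
      · intro h
        have : k ∈ (W n)⁻¹ ↔ k⁻¹ ∈ W n := Set.mem_inv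
        rw [hWsymm] at this; exact this.mp h
    simp only [hδdef]
    by_cases h : ∃ n, k ∉ W n
    · have h' : ∃ n, k⁻¹ ∉ W n := by
        obtain ⟨n, hn⟩ := h; exact ⟨n, (hiff n).mpr hn⟩
      rw [dif_pos h', dif_pos h]
      congr 1
      exact le_antisymm (Nat.find_mono fun n => (hiff n).mpr) (Nat.find_mono fun n => (hiff n).mp)
    · have h' : ¬ ∃ n, k⁻¹ ∉ W n := by
        rintro ⟨n, hn⟩; exact h ⟨n, (hiff n).mp hn⟩
      rw [dif_neg h', dif_neg h]
  have hdself : ∀ g : G, d g g = 0 := by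
    intro g; simp only [hddef]; rw [inv_mul_cancel]; exact hδe
  have hdsymm : ∀ g h : G, d g h = d h g := by
    intro g h
    simp only [hddef]
    rw [← hδsymm (g⁻¹ * h), mul_inv_rev, inv_inv]
  have hle_δ : ∀ (k : G) (n : ℕ), (1 / 2 : ℝ≥0) ^ n ≤ δ k ↔ k ∉ W n := by
    intro k n
    simp only [hδdef]
    split_ifs with h
    · rw [(pow_right_strictAnti₀ hr.1 hr.2).le_iff_ge, Nat.find_le_iff]
      exact ⟨fun ⟨m, hmn, hm⟩ hn => hm (hWanti' hmn hn), fun h' => ⟨n, le_rfl, h'⟩⟩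
    · push_neg at h
      simp [h n, (pow_pos hr.1 n).not_ge]
  have hchain : ∀ x₁ x₂ x₃ x₄ : G, d x₁ x₄ ≤ 2 * max (d x₁ x₂) (max (d x₂ x₃) (d x₃ x₄)) := by
    intro x₁ x₂ x₃ x₄
    by_cases H : ∃ n, x₁⁻¹ * x₄ ∉ W n
    · have : d x₁ x₄ = (1 / 2 : ℝ≥0) ^ Nat.find H := by simp only [hddef, hδdef]; rw [dif_pos H]
      rw [this, ← div_le_iff₀' zero_lt_two, ← mul_one_div (_ ^ _), ← pow_succ]
      simp only [hddef, le_max_iff, hle_δ, ← not_and_or]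
      rintro ⟨h12, h23, h34⟩
      have hmem : x₁⁻¹ * x₄ ∈ W (Nat.find H + 1) * W (Nat.find H + 1) * W (Nat.find H + 1) := by
        have := Set.mul_mem_mul (Set.mul_mem_mul h12 h23) h34
        simpa [mul_assoc] using this
      exact Nat.find_spec H (hWcube _ hmem)
    · have : d x₁ x₄ = 0 := by simp only [hddef, hδdef]; rw [dif_neg H]
      rw [this]; exact zero_le
  letI I := PseudoMetricSpace.ofPreNNDist d hdself hdsymm
  have hdist_le : ∀ x y : G, dist x y ≤ d x y := PseudoMetricSpace.dist_ofPreNNDist_le _ _ _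
  have hd_le : ∀ x y : G, (d x y : ℝ) ≤ 2 * dist x y :=
    PseudoMetricSpace.le_two_mul_dist_ofPreNNDist _ _ _ hchain
  have hdinv : ∀ a u v : G, d (a * u) (a * v) = d u v := by
    intro a u v
    simp only [hddef]
    congr 1
    simp [mul_assoc]
  have hinv : ∀ a g h : G, dist (a * g) (a * h) = dist g h := by
    intro a g h
    rw [PseudoMetricSpace.dist_ofPreNNDist, PseudoMetricSpace.dist_ofPreNNDist]
    congr 1
    have hsurj : Function.Surjective (fun l : List G => l.map (a * ·)) := by
      intro l
      refine ⟨l.map (a⁻¹ * ·), ?_⟩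
      simp [List.map_map, Function.comp_def]
    rw [← hsurj.iInf_comp]
    refine iInf_congr fun l => ?_
    have h1 : (a * g) :: l.map (a * ·) = (g :: l).map (a * ·) := by simp
    have h2 : l.map (a * ·) ++ [a * h] = (l ++ [h]).map (a * ·) := by simp
    rw [h1, h2, List.zipWith_map]
    simp only [hdinv]
  refine ⟨dist, fun g h => dist_nonneg, ?_, fun g => dist_self g, fun g h => dist_comm g h,
    fun g h k => dist_triangle g h k, hinv, ?_, ?_⟩
  · intro g h
    refine (hdist_le g h).trans ?_
    exact_mod_cast hδ1 _
  · intro ε hε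
    obtain ⟨n, hn⟩ := exists_pow_lt_of_lt_one hε (by norm_num : (1/2 : ℝ) < 1)
    refine Filter.mem_of_superset (hWmem n) ?_
    intro k hk
    have h1 : δ k < (1/2 : ℝ≥0) ^ n := lt_of_not_ge fun hc => (hle_δ k n).mp hc hk
    have h2 : dist (1 : G) k ≤ (δ k : ℝ) := by
      have := hdist_le 1 k
      simpa [hddef] using this
    refine h2.trans_lt (lt_trans ?_ hn)
    rw [show ((1:ℝ)/2) ^ n = (((1/2 : ℝ≥0) ^ n : ℝ≥0) : ℝ) by push_cast; ring]
    exact_mod_cast h1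
  · intro V hV
    obtain ⟨n, hn⟩ := hWbasis V hV
    refine ⟨(1/2 : ℝ) ^ n / 2, by positivity, ?_⟩
    intro k hk
    simp only [Set.mem_setOf_eq] at hk
    have h1 : (d 1 k : ℝ) < (1/2 : ℝ) ^ n := by
      calc (d 1 k : ℝ) ≤ 2 * dist (1:G) k := hd_le 1 k
        _ < 2 * ((1/2 : ℝ) ^ n / 2) := by linarith
        _ = (1/2 : ℝ) ^ n := by ring
    have h2 : δ k < (1/2 : ℝ≥0) ^ n := by
      have : (δ k : ℝ) < (((1/2 : ℝ≥0) ^ n : ℝ≥0) : ℝ) := by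
        push_cast
        simpa [hddef] using h1
      exact_mod_cast this
    have h3 : k ∈ W n := by
      by_contra hc
      exact absurd ((hle_δ k n).mpr hc) (not_le_of_gt h2)
    exact hn h3

/-- For every Polish group `G` there exists a compact Polish `G`-space
`𝓤_G` which is universal for Borel `G`-embeddings: every Polish `G`-space `X` admits an
injective `G`-mapping `π : X → 𝓤_G` such that the preimage under `π` of every open set is
Borel in `X`. -/
theorem exists_universal_compact_polish_G_space {G : Type*} [Group G] [TopologicalSpace G]
    [IsTopologicalGroup G] [PolishSpace G] :
    ∃ (U : Type) (tU : TopologicalSpace U) (aU : MulAction G U),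
      @CompactSpace U tU ∧ @PolishSpace U tU ∧ @ContinuousSMul G U aU.toSMul _ tU ∧
      ∀ (X : Type) (tX : TopologicalSpace X) (aX : MulAction G X),
        @PolishSpace X tX → @ContinuousSMul G X aX.toSMul _ tX →
        ∃ π : X → U, Function.Injective π ∧
          (∀ (g : G) (x : X),
            π (@SMul.smul G X aX.toSMul g x) = @SMul.smul G U aU.toSMul g (π x)) ∧
          (∀ V : Set U, IsOpen[tU] V → @MeasurableSet X (@borel X tX) (π ⁻¹' V)) := by
  classical
  obtain ⟨D, hD0, hD1, hDself, hDsymm, hDtri, hDinv, hDball, hDsmall⟩ :=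
    exists_invariant_dist (G := G)
  have hD1form : ∀ u v : G, D u v = D 1 (u⁻¹ * v) := fun u v => by
    have := hDinv u 1 (u⁻¹ * v)
    simp only [mul_one, mul_inv_cancel_left] at this
    exact this
  have hTD : Filter.Tendsto (fun k : G => D 1 k) (𝓝 (1 : G)) (𝓝 0) := by
    refine tendsto_order.2 ⟨fun a ha => ?_, fun a ha => ?_⟩
    · exact Filter.Eventually.of_forall fun k => lt_of_lt_of_le ha (hD0 1 k)
    · exact hDball a ha
  -- dense sequence in G
  let σ : ℕ → G := TopologicalSpace.denseSeq G
  have hσ : DenseRange σ := TopologicalSpace.denseRange_denseSeq G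
  -- the compact space of `D`-Lipschitz functions with values in [0,1]
  let LS : Set (G → ℝ) := {f | (∀ g, f g ∈ Set.Icc (0:ℝ) 1) ∧ ∀ g h, |f g - f h| ≤ D g h}
  let L : Type _ := ↥LS
  have hLclosed : IsClosed LS := by
    have : LS = (⋂ g : G, {f : G → ℝ | f g ∈ Set.Icc (0:ℝ) 1}) ∩
        ⋂ g : G, ⋂ h : G, {f : G → ℝ | |f g - f h| ≤ D g h} := by
      ext f
      simp [LS, Set.mem_iInter, forall_and]
    rw [this]
    refine IsClosed.inter (isClosed_iInter fun g => ?_) (isClosed_iInter fun g =>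
      isClosed_iInter fun h => ?_)
    · exact isClosed_Icc.preimage (continuous_apply g)
    · exact isClosed_le (((continuous_apply g).sub (continuous_apply h)).abs) continuous_const
  have hLcomp : IsCompact LS := by
    refine (isCompact_univ_pi fun _ : G => (isCompact_Icc (a := (0:ℝ)) (b := 1))).of_isClosed_subset hLclosed ?_
    intro f hf
    rw [Set.mem_univ_pi]
    exact fun g => hf.1 g
  haveI : CompactSpace L := isCompact_iff_compactSpace.mp hLcomp
  -- action of G on L
  have smul_mem : ∀ (g : G) (f : L), (fun h => f.1 (g⁻¹ * h)) ∈ LS := by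
    rintro g ⟨f, hf1, hf2⟩
    refine ⟨fun h => hf1 _, fun h h' => ?_⟩
    refine (hf2 (g⁻¹ * h) (g⁻¹ * h')).trans ?_
    exact le_of_eq (hDinv g⁻¹ h h')
  letI aL : MulAction G L :=
    { smul := fun g f => ⟨fun h => f.1 (g⁻¹ * h), smul_mem g f⟩
      one_smul := fun f => Subtype.ext (funext fun h => by
        show f.1 ((1:G)⁻¹ * h) = f.1 h
        rw [inv_one, one_mul])
      mul_smul := fun g g' f => Subtype.ext (funext fun h => by
        show f.1 ((g * g')⁻¹ * h) = f.1 (g'⁻¹ * (g⁻¹ * h))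
        rw [mul_inv_rev, mul_assoc]) }
  have smul_apply : ∀ (g : G) (f : L) (h : G), (g • f).1 h = f.1 (g⁻¹ * h) := fun _ _ _ => rfl
  haveI cSL : ContinuousSMul G L := by
    constructor
    apply Continuous.subtype_mk (f := fun p : G × L => fun h : G => p.2.1 (p.1⁻¹ * h))
    rw [continuous_pi_iff]
    intro h
    rw [continuous_iff_continuousAt]
    rintro ⟨g₀, f₀⟩
    have hA : Filter.Tendsto (fun p : G × L => p.2.1 (p.1⁻¹ * h) - p.2.1 (g₀⁻¹ * h))
        (𝓝 (g₀, f₀)) (𝓝 0) := by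
      have hφ : Continuous fun g : G => (g⁻¹ * h)⁻¹ * (g₀⁻¹ * h) := by fun_prop
      have hφ1 : (g₀⁻¹ * h)⁻¹ * (g₀⁻¹ * h) = 1 := inv_mul_cancel _
      have hlim : Filter.Tendsto (fun p : G × L => D 1 ((p.1⁻¹ * h)⁻¹ * (g₀⁻¹ * h)))
          (𝓝 (g₀, f₀)) (𝓝 0) := by
        refine hTD.comp ?_
        have := ((hφ.comp continuous_fst).tendsto ((g₀, f₀) : G × L))
        simp only [Function.comp_def] at this
        rwa [hφ1] at this
      refine squeeze_zero_norm (fun p => ?_) hlim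
      rw [Real.norm_eq_abs]
      refine (p.2.2.2 (p.1⁻¹ * h) (g₀⁻¹ * h)).trans ?_
      exact le_of_eq (hD1form _ _)
    have hB : Filter.Tendsto (fun p : G × L => p.2.1 (g₀⁻¹ * h)) (𝓝 (g₀, f₀))
        (𝓝 (f₀.1 (g₀⁻¹ * h))) :=
      (((continuous_apply (g₀⁻¹ * h)).comp (continuous_subtype_val.comp continuous_snd)).tendsto _)
    have := hA.add hB
    simp only [zero_add, sub_add_cancel] at this
    exact this
  -- the compact space U and its embedding into a Polish space of type `Type 0`
  let U : Type _ := ℕ → L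
  let J : U → (ℕ → ℕ → ℝ) := fun F n m => (F n).1 (σ m)
  have hJcont : Continuous J := by
    refine continuous_pi fun n => continuous_pi fun m => ?_
    exact (continuous_apply (σ m)).comp (continuous_subtype_val.comp (continuous_apply n))
  have hLext : ∀ f₁ f₂ : L, (∀ m : ℕ, f₁.1 (σ m) = f₂.1 (σ m)) → f₁ = f₂ := by
    intro f₁ f₂ hm
    refine Subtype.ext (funext fun g => ?_)
    have hle : ∀ ε : ℝ, 0 < ε → |f₁.1 g - f₂.1 g| ≤ 2 * ε := by
      intro ε hε
      have hmem : {k : G | D g k < ε} ∈ 𝓝 g := by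
        have hcont : ContinuousAt (fun k : G => g⁻¹ * k) g := by fun_prop
        have heq : {k : G | D g k < ε} = (fun k : G => g⁻¹ * k) ⁻¹' {k : G | D 1 k < ε} := by
          ext k
          simp [hD1form g k]
        rw [heq]
        exact hcont.preimage_mem_nhds (by rw [inv_mul_cancel]; exact hDball ε hε)
      obtain ⟨m, hm'⟩ : ∃ m, σ m ∈ interior {k : G | D g k < ε} := by
        have : (interior {k : G | D g k < ε}).Nonempty :=
          ⟨g, mem_interior_iff_mem_nhds.mpr hmem⟩
        obtain ⟨m, hmem2⟩ := hσ.exists_mem_open isOpen_interior this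
        exact ⟨m, hmem2⟩
      have hdm := interior_subset hm'
      simp only [Set.mem_setOf_eq] at hdm
      have e0 := hm m
      have e1 := f₁.2.2 g (σ m)
      have e2 := f₂.2.2 (σ m) g
      have hDsm : D (σ m) g = D g (σ m) := hDsymm _ _
      calc |f₁.1 g - f₂.1 g| ≤ |f₁.1 g - f₁.1 (σ m)| + |f₁.1 (σ m) - f₂.1 g| := abs_sub_le _ _ _
        _ = |f₁.1 g - f₁.1 (σ m)| + |f₂.1 (σ m) - f₂.1 g| := by rw [e0]
        _ ≤ D g (σ m) + D (σ m) g := add_le_add e1 e2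
        _ ≤ 2 * ε := by rw [hDsm]; linarith
    have : |f₁.1 g - f₂.1 g| ≤ 0 := by
      refine le_of_forall_pos_le_add fun ε hε => ?_
      have := hle (ε / 2) (by linarith)
      linarith
    exact sub_eq_zero.mp (abs_nonpos_iff.mp this)
  have hJinj : Function.Injective J := by
    intro F₁ F₂ hJ
    funext n
    exact hLext (F₁ n) (F₂ n) fun m => congrFun (congrFun hJ n) m
  have hJemb : Topology.IsClosedEmbedding J := hJcont.isClosedEmbedding hJinj
  let U₀ : Type := ↥(Set.range J)
  let e : U ≃ₜ Set.range J := hJemb.toIsEmbedding.toHomeomorph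
  haveI : CompactSpace U₀ := isCompact_iff_compactSpace.mp (isCompact_range hJcont)
  haveI : PolishSpace U₀ := hJemb.isClosed_range.polishSpace
  letI aU : MulAction G U₀ :=
    { smul := fun g u => e (g • (e.symm u))
      one_smul := fun u => by
        show e ((1:G) • (e.symm u)) = u
        rw [one_smul]
        exact e.apply_symm_apply u
      mul_smul := fun g g' u => by
        show e ((g * g') • (e.symm u)) = e (g • (e.symm (e (g' • e.symm u))))
        rw [e.symm_apply_apply, mul_smul] }
  haveI cSU : ContinuousSMul G U₀ := by
    constructor
    show Continuous fun p : G × U₀ => e (p.1 • (e.symm p.2))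
    exact e.continuous.comp (continuous_smul.comp
      (continuous_fst.prodMk (e.symm.continuous.comp continuous_snd)))
  refine ⟨U₀, inferInstance, aU, inferInstance, inferInstance, cSU, ?_⟩
  intro X tX aX hXpol hXsmul
  letI := tX; letI := aX; haveI := hXpol; haveI := hXsmul
  haveI : T2Space X := inferInstance
  letI := TopologicalSpace.upgradeIsCompletelyMetrizable X
  obtain ⟨Vs, hVsopen, hVssep⟩ : ∃ Vs : ℕ → Set X, (∀ n, IsOpen (Vs n)) ∧
      ∀ x y : X, x ≠ y → ∃ n, x ∈ Vs n ∧ y ∉ Vs n := by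
    obtain ⟨b, hbc, hbne, hbb⟩ := TopologicalSpace.exists_countable_basis X
    obtain ⟨Vs, hVs⟩ := (hbc.insert ∅).exists_eq_range (Set.insert_nonempty _ _)
    refine ⟨Vs, ?_, ?_⟩
    · intro n
      have hmem : Vs n ∈ insert (∅ : Set X) b := hVs ▸ Set.mem_range_self n
      rcases Set.mem_insert_iff.mp hmem with h | h
      · rw [h]; exact isOpen_empty
      · exact hbb.isOpen h
    · intro x y hxy
      have hyopen : IsOpen ({y}ᶜ : Set X) := isOpen_compl_singleton
      have hx : x ∈ ({y}ᶜ : Set X) := hxy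
      obtain ⟨t, htb, hxt, hts⟩ := hbb.exists_subset_of_mem_open hx hyopen
      have hmem : t ∈ Set.range Vs := hVs ▸ Set.mem_insert_of_mem _ htb
      obtain ⟨n, rfl⟩ := hmem
      exact ⟨n, hxt, fun hy => (hts hy) rfl⟩
  let f : ℕ → X → ℝ := fun n x => min 1 (Metric.infDist x (Vs n)ᶜ)
  have hfcont : ∀ n, Continuous (f n) :=
    fun n => continuous_const.min (Metric.continuous_infDist_pt _)
  have hf0 : ∀ n x, 0 ≤ f n x := fun n x => le_min zero_le_one Metric.infDist_nonneg
  have hf1 : ∀ n x, f n x ≤ 1 := fun n x => min_le_left _ _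
  have hfzero : ∀ n y, y ∉ Vs n → f n y = 0 := by
    intro n y hy
    have : Metric.infDist y (Vs n)ᶜ = 0 := Metric.infDist_zero_of_mem hy
    simp [f, this]
  have hfpos : ∀ n x y, x ∈ Vs n → y ∉ Vs n → 0 < f n x := by
    intro n x y hx hy
    have hcl : IsClosed ((Vs n)ᶜ) := (hVsopen n).isClosed_compl
    have hne : ((Vs n)ᶜ : Set X).Nonempty := ⟨y, hy⟩
    have hpos := (hcl.notMem_iff_infDist_pos hne).mp (by simpa using hx)
    exact lt_min one_pos hpos
  have hbdd : ∀ (n : ℕ) (x : X) (g : G),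
      BddBelow (Set.range fun k : G => f n (k⁻¹ • x) + D g k) := by
    intro n x g
    refine ⟨0, ?_⟩
    rintro r ⟨k, rfl⟩
    exact add_nonneg (hf0 _ _) (hD0 _ _)
  let lam : ℕ → X → G → ℝ := fun n x g => ⨅ k : G, (f n (k⁻¹ • x) + D g k)
  have lam_le : ∀ n x g k, lam n x g ≤ f n (k⁻¹ • x) + D g k :=
    fun n x g k => ciInf_le (hbdd n x g) k
  have lam_nonneg : ∀ n x g, 0 ≤ lam n x g :=
    fun n x g => le_ciInf fun k => add_nonneg (hf0 _ _) (hD0 _ _)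
  have lam_le_one : ∀ n x g, lam n x g ≤ 1 := by
    intro n x g
    refine (lam_le n x g g).trans ?_
    rw [hDself g]
    simpa using hf1 n (g⁻¹ • x)
  have lam_lip : ∀ n x g g', |lam n x g - lam n x g'| ≤ D g g' := by
    intro n x g g'
    have key : ∀ u v : G, lam n x u - D u v ≤ lam n x v := by
      intro u v
      have h1 : ∀ k : G, lam n x u - D u v ≤ f n (k⁻¹ • x) + D v k := by
        intro k
        have h2 := lam_le n x u k
        have h3 := hDtri u v k
        linarith
      have := le_ciInf h1
      exact this
    have k1 := key g g'
    have k2 := key g' g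
    have k3 := hDsymm g' g
    rw [abs_sub_le_iff]
    constructor <;> linarith
  have lam_memLS : ∀ n x, (fun g => lam n x g) ∈ LS := fun n x =>
    ⟨fun g => ⟨lam_nonneg n x g, lam_le_one n x g⟩, fun g h => lam_lip n x g h⟩
  let PiU : X → U := fun x n => ⟨fun g => lam n x g, lam_memLS n x⟩
  have lam_smul : ∀ (n : ℕ) (x : X) (g h : G), lam n (g • x) h = lam n x (g⁻¹ * h) := by
    intro n x g h
    refine le_antisymm (le_ciInf fun k => ?_) (le_ciInf fun k => ?_)
    · have h1 := lam_le n (g • x) h (g * k)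
      refine h1.trans (le_of_eq ?_)
      congr 1
      · congr 1
        rw [mul_inv_rev, mul_smul, inv_smul_smul]
      · rw [← hDinv g⁻¹ h (g * k), inv_mul_cancel_left]
    · have h1 := lam_le n x (g⁻¹ * h) (g⁻¹ * k)
      refine h1.trans (le_of_eq ?_)
      congr 1
      · congr 1
        rw [mul_inv_rev, inv_inv, mul_smul]
      · exact hDinv g⁻¹ h k
  have PiU_equivariant : ∀ (g : G) (x : X), PiU (g • x) = g • PiU x := by
    intro g x
    funext n
    refine Subtype.ext (funext fun h => ?_)
    exact lam_smul n x g h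
  have lam_zero : ∀ (n : ℕ) (y : X), y ∉ Vs n → lam n y 1 = 0 := by
    intro n y hy
    refine le_antisymm ?_ (lam_nonneg n y 1)
    have h1 := lam_le n y 1 1
    have h2 : (1 : G)⁻¹ • y = y := by rw [inv_one, one_smul]
    rw [h2, hfzero n y hy, hDself 1] at h1
    simpa using h1
  have hinj : Function.Injective (fun x : X => e (PiU x)) := by
    intro x y hxy
    by_contra hne
    obtain ⟨n, hxV, hyV⟩ := hVssep x y hne
    have hPU : PiU x = PiU y := e.injective hxy
    have heq : lam n x 1 = lam n y 1 := congrArg (fun F : U => (F n).1 1) hPU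
    have hy0 : lam n y 1 = 0 := lam_zero n y hyV
    have hc : 0 < f n x := hfpos n x y hxV hyV
    have hcont : Continuous fun k : G => f n (k⁻¹ • x) :=
      (hfcont n).comp (continuous_inv.smul continuous_const)
    have hW : {k : G | f n x / 2 < f n (k⁻¹ • x)} ∈ 𝓝 (1:G) := by
      have hop : IsOpen {k : G | f n x / 2 < f n (k⁻¹ • x)} := isOpen_lt continuous_const hcont
      refine hop.mem_nhds ?_
      show f n x / 2 < f n ((1:G)⁻¹ • x)
      rw [inv_one, one_smul]
      linarith
    obtain ⟨ε, hε, hsub⟩ := hDsmall _ hW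
    have hlow : min (f n x / 2) ε ≤ lam n x 1 := by
      refine le_ciInf fun k => ?_
      by_cases hk : D 1 k < ε
      · have h1 : f n x / 2 < f n (k⁻¹ • x) := hsub hk
        have h2 := hD0 1 k
        calc min (f n x / 2) ε ≤ f n x / 2 := min_le_left _ _
          _ ≤ f n (k⁻¹ • x) + D 1 k := by linarith
      · push_neg at hk
        have h1 := hf0 n (k⁻¹ • x)
        calc min (f n x / 2) ε ≤ ε := min_le_right _ _
          _ ≤ f n (k⁻¹ • x) + D 1 k := by linarith
    have hposl : 0 < lam n x 1 := lt_of_lt_of_le (lt_min (by linarith) hε) hlow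
    rw [heq, hy0] at hposl
    exact lt_irrefl 0 hposl
  refine ⟨fun x => e (PiU x), hinj, ?_, ?_⟩
  · intro g x
    show e (PiU (g • x)) = e (g • (e.symm (e (PiU x))))
    rw [PiU_equivariant g x, e.symm_apply_apply]
  · intro V hV
    letI : MeasurableSpace X := borel X
    haveI : BorelSpace X := ⟨rfl⟩
    have meas_lam : ∀ (n : ℕ) (g : G), Measurable fun x : X => lam n x g := by
      intro n g
      refine measurable_of_Iio fun a => ?_
      have hpre : (fun x : X => lam n x g) ⁻¹' Set.Iio a =
          ⋃ k : G, {x : X | f n (k⁻¹ • x) + D g k < a} := by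
        ext x
        simp only [Set.mem_preimage, Set.mem_Iio, Set.mem_iUnion, Set.mem_setOf_eq]
        constructor
        · exact fun hx => exists_lt_of_ciInf_lt hx
        · rintro ⟨k, hk⟩
          exact lt_of_le_of_lt (lam_le n x g k) hk
      have hopen : IsOpen (⋃ k : G, {x : X | f n (k⁻¹ • x) + D g k < a}) := by
        refine isOpen_iUnion fun k => ?_
        have hc : Continuous fun x : X => f n (k⁻¹ • x) + D g k :=
          ((hfcont n).comp (continuous_const_smul k⁻¹)).add continuous_const
        exact isOpen_lt hc continuous_const
      rw [hpre]
      exact hopen.measurableSet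
    have hVu : IsOpen (e ⁻¹' V) := hV.preimage e.continuous
    obtain ⟨W, hWopen, hWeq⟩ := hJemb.toIsInducing.isOpen_iff.mp hVu
    have hKmeas : Measurable fun x : X => J (PiU x) := by
      refine measurable_pi_lambda _ fun n => measurable_pi_lambda _ fun m => ?_
      exact meas_lam n (σ m)
    have hpre2 : (fun x : X => e (PiU x)) ⁻¹' V = (fun x : X => J (PiU x)) ⁻¹' W := by
      ext x
      change e (PiU x) ∈ V ↔ J (PiU x) ∈ W
      constructor
      · intro hx
        have : PiU x ∈ e ⁻¹' V := hx
        rw [← hWeq] at this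
        exact this
      · intro hx
        have : PiU x ∈ J ⁻¹' W := hx
        rw [hWeq] at this
        exact this
    rw [hpre2]
    exact hKmeas hWopen.measurableSet
end
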